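/- arXiv:2010.00436 — 3 statements merged into one kernel-verified Lean document; each statement's English description precedes it below -/
import Mathlib

section
/- For a partition $\lambda = (\lambda_1 \ge \dots \ge \lambda_\ell > 0)$, the shifted Schur polynomial expands as $s_\lambda(\mathbf{q}-[z^{-1}]) = \sum_{k=0}^{\ell} M^{[k]}(\mathbf{q})\, z^{-k}$, where $M^{[k]}$ is the $(1,k+1)$-th cofactor of the $(\ell+1)\times(\ell+1)$ matrix $M_{0,\lambda_1,\dots,\lambda_\ell} := (h_{k_i - i + j})_{1\le i,j\le \ell+1}$ with $(k_1,\dots,k_{\ell+1}) = (0,\lambda_1,\dots,\lambda_\ell)$. -/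
open PowerSeries Finset

noncomputable section

abbrev MvP := MvPolynomial ℕ ℂ

/-- Exponential of a power series (with zero constant term) over `MvP`,
defined coefficientwise: `coeff n (exp f) = ∑_{m ≤ n} coeff n (f^m) / m!`. -/
def psExp (f : PowerSeries MvP) : PowerSeries MvP :=
  PowerSeries.mk fun n => ∑ m ∈ Finset.range (n + 1),
    MvPolynomial.C ((m.factorial : ℂ)⁻¹) * PowerSeries.coeff (R := MvP) n (f ^ m)

/-- The series `∑_{n ≥ 1} q_n z^n`, where `q_n` is the variable `X n`. -/
def genQ : PowerSeries MvP := PowerSeries.mk fun n => if n = 0 then 0 else MvPolynomial.X n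

/-- The complete homogeneous polynomials: `∑ h_k z^k = exp (∑_{n≥1} q_n z^n)`. -/
def hh (k : ℕ) : MvP := PowerSeries.coeff (R := MvP) k (psExp genQ)

/-- `h_k` extended to integer indices by `0` for negative `k`. -/
def hZ (k : ℤ) : MvP := if k < 0 then 0 else hh k.toNat

/-- The determinant `det (h_{k_i - i + j})`. -/
def detM (ks : List ℤ) : MvP :=
  Matrix.det (Matrix.of fun i j : Fin ks.length => hZ (ks.get i - ((i : ℕ) : ℤ) + ((j : ℕ) : ℤ)))

/-- The Schur polynomial via the Jacobi–Trudi formula. -/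
def schur (l : List ℕ) : MvP := detM (l.map (fun a => (a : ℤ)))

/-- A list of natural numbers is a partition: weakly decreasing with positive parts. -/
def IsPartition (l : List ℕ) : Prop := l.Chain' (· ≥ ·) ∧ ∀ p ∈ l, 0 < p

/-- The substitution `q_n ↦ q_n - 1/(n zⁿ)`, with `PowerSeries.X` playing the role of `z⁻¹`. -/
def shiftNeg : MvP →+* PowerSeries MvP :=
  MvPolynomial.eval₂Hom ((PowerSeries.C (R := MvP)).comp MvPolynomial.C)
    fun n => PowerSeries.C (R := MvP) (MvPolynomial.X n)
      - PowerSeries.C (R := MvP) (MvPolynomial.C ((n : ℂ)⁻¹)) * PowerSeries.X ^ n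

/-- The substitution `q_n ↦ q_n + 1/(n zⁿ)`, with `PowerSeries.X` playing the role of `z⁻¹`. -/
def shiftPos : MvP →+* PowerSeries MvP :=
  MvPolynomial.eval₂Hom ((PowerSeries.C (R := MvP)).comp MvPolynomial.C)
    fun n => PowerSeries.C (R := MvP) (MvPolynomial.X n)
      + PowerSeries.C (R := MvP) (MvPolynomial.C ((n : ℂ)⁻¹)) * PowerSeries.X ^ n

namespace S2aux

variable {A : Type*} [CommRing A] [Algebra ℂ A]

/-- Formal exponential over a `ℂ`-algebra. -/
def E (f : PowerSeries A) : PowerSeries A :=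
  PowerSeries.mk fun n => ∑ m ∈ Finset.range (n + 1),
    algebraMap ℂ A ((m.factorial : ℂ)⁻¹) * PowerSeries.coeff (R := A) n (f ^ m)

omit [Algebra ℂ A] in
lemma coeff_pow_zero {f : PowerSeries A} (hf : constantCoeff (R := A) f = 0)
    {n m : ℕ} (h : n < m) : coeff (R := A) n (f ^ m) = 0 := by
  have : (X : PowerSeries A) ^ m ∣ f ^ m := pow_dvd_pow_of_dvd (X_dvd_iff.2 hf) m
  exact (X_pow_dvd_iff.1 this) n h

lemma coeff_E {f : PowerSeries A} (hf : constantCoeff (R := A) f = 0) (n N : ℕ) (hN : n < N) :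
    coeff (R := A) n (E f) = ∑ m ∈ Finset.range N,
      algebraMap ℂ A ((m.factorial : ℂ)⁻¹) * coeff (R := A) n (f ^ m) := by
  rw [E, coeff_mk]
  apply Finset.sum_subset
  · exact Finset.range_subset_range.2 hN
  · intro m _ hm
    rw [coeff_pow_zero hf (by simpa using hm), mul_zero]

lemma constantCoeff_E (f : PowerSeries A) : constantCoeff (R := A) (E f) = 1 := by
  rw [← coeff_zero_eq_constantCoeff]
  simp [E, coeff_mk]

lemma nat_cancel (n : ℕ) {a b : A} (h : a * ((n + 1 : ℕ) : A) = b * ((n + 1 : ℕ) : A)) :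
    a = b := by
  have h2 : ((n + 1 : ℕ) : A) = algebraMap ℂ A ((n + 1 : ℕ) : ℂ) := by simp
  have h3 : a * ((n+1:ℕ) : A) * algebraMap ℂ A (((n + 1 : ℕ) : ℂ)⁻¹)
      = b * ((n+1:ℕ) : A) * algebraMap ℂ A (((n + 1 : ℕ) : ℂ)⁻¹) := by rw [h]
  have h4 : ((n+1:ℕ) : A) * algebraMap ℂ A (((n + 1 : ℕ) : ℂ)⁻¹) = 1 := by
    rw [h2, ← map_mul, mul_inv_cancel₀ (Nat.cast_ne_zero.2 (Nat.succ_ne_zero n)), map_one]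
  rwa [mul_assoc, h4, mul_one, mul_assoc, h4, mul_one] at h3

lemma E_deriv {f : PowerSeries A} (hf : constantCoeff (R := A) f = 0) :
    d⁄dX A (E f) = d⁄dX A f * E f := by
  ext n
  rw [coeff_derivative]
  have lhs : coeff (R := A) (n + 1) (E f) * (n + 1) =
      ∑ m ∈ Finset.range (n + 1),
        algebraMap ℂ A ((m.factorial : ℂ)⁻¹) * coeff (R := A) n (f ^ m * d⁄dX A f) := by
    rw [coeff_E hf (n+1) (n+2) (by omega), Finset.sum_mul]
    rw [Finset.sum_range_succ']
    have h0 : algebraMap ℂ A ((Nat.factorial 0 : ℂ)⁻¹) * coeff (R := A) (n+1) (f ^ 0) * (↑n + 1) = 0 := by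
      simp
    rw [h0, add_zero]
    refine Finset.sum_congr rfl fun m _ => ?_
    have hd : coeff (R := A) (n + 1) (f ^ (m + 1)) * (n + 1) = coeff (R := A) n (d⁄dX A (f ^ (m + 1))) := by
      rw [coeff_derivative]
    have hp : d⁄dX A (f ^ (m + 1)) = (m + 1) • (f ^ m * d⁄dX A f) := by
      rw [Derivation.leibniz_pow]
      simp [smul_smul, smul_mul_assoc]
    rw [mul_assoc, hd, hp, map_nsmul, nsmul_eq_mul, ← mul_assoc]
    congr 1
    have : ((m + 1 : ℕ) : A) = algebraMap ℂ A ((m + 1 : ℕ) : ℂ) := by simp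
    rw [this, ← map_mul]
    congr 1
    rw [Nat.factorial_succ]
    push_cast
    have hm1 : ((m : ℂ) + 1) ≠ 0 := Nat.cast_add_one_ne_zero m
    have hmf : ((m.factorial : ℂ)) ≠ 0 := Nat.cast_ne_zero.2 m.factorial_ne_zero
    field_simp
  rw [lhs, coeff_mul]
  symm
  calc ∑ p ∈ antidiagonal n, coeff (R := A) p.1 (d⁄dX A f) * coeff (R := A) p.2 (E f)
      = ∑ p ∈ antidiagonal n, ∑ m ∈ range (n + 1),
          algebraMap ℂ A ((m.factorial : ℂ)⁻¹) * (coeff (R := A) p.1 (d⁄dX A f) * coeff (R := A) p.2 (f ^ m)) := by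
        refine Finset.sum_congr rfl fun p hp => ?_
        rw [coeff_E hf p.2 (n+1) (Nat.lt_succ_of_le (Finset.HasAntidiagonal.antidiagonal.snd_le hp)), Finset.mul_sum]
        exact Finset.sum_congr rfl fun m _ => by ring
    _ = ∑ m ∈ range (n + 1), algebraMap ℂ A ((m.factorial : ℂ)⁻¹) *
          ∑ p ∈ antidiagonal n, coeff (R := A) p.1 (d⁄dX A f) * coeff (R := A) p.2 (f ^ m) := by
        rw [Finset.sum_comm]
        exact Finset.sum_congr rfl fun m _ => by rw [Finset.mul_sum]
    _ = ∑ m ∈ range (n + 1), algebraMap ℂ A ((m.factorial : ℂ)⁻¹) *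
          coeff (R := A) n (f ^ m * d⁄dX A f) := by
        refine Finset.sum_congr rfl fun m _ => ?_
        rw [mul_comm (f ^ m), coeff_mul]

/-- Uniqueness for the ODE `u' = a u`. -/
lemma ode_unique {a u v : PowerSeries A} (hu : d⁄dX A u = a * u) (hv : d⁄dX A v = a * v)
    (h0 : constantCoeff (R := A) u = constantCoeff (R := A) v) : u = v := by
  ext n
  induction n using Nat.strong_induction_on with
  | _ n ih =>
    match n with
    | 0 => simpa [coeff_zero_eq_constantCoeff] using h0
    | n + 1 =>
      apply nat_cancel n
      have hu' := congrArg (coeff (R := A) n) hu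
      have hv' := congrArg (coeff (R := A) n) hv
      rw [coeff_derivative] at hu' hv'
      push_cast
      rw [hu', hv', coeff_mul, coeff_mul]
      refine Finset.sum_congr rfl fun p hp => ?_
      rw [ih p.2 (Nat.lt_succ_of_le (Finset.HasAntidiagonal.antidiagonal.snd_le hp))]

lemma E_add {f g : PowerSeries A} (hf : constantCoeff (R := A) f = 0) (hg : constantCoeff (R := A) g = 0) :
    E (f + g) = E f * E g := by
  apply ode_unique (a := d⁄dX A f + d⁄dX A g)
  · rw [E_deriv (by simp [hf, hg]), map_add]
  · have := Derivation.leibniz (d⁄dX A) (E f) (E g)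
    rw [this]
    simp only [smul_eq_mul]
    rw [E_deriv hf, E_deriv hg]
    ring
  · simp [constantCoeff_E]


-- ### the MvP-specific part

abbrev R : Type := PowerSeries MvP

lemma map_psExp (φ : MvP →+* A) (hφ : ∀ c, φ (MvPolynomial.C c) = algebraMap ℂ A c)
    (f : PowerSeries MvP) : PowerSeries.map φ (psExp f) = E (PowerSeries.map φ f) := by
  ext n
  rw [coeff_map, psExp, coeff_mk, E, coeff_mk, map_sum]
  refine Finset.sum_congr rfl fun m _ => ?_
  rw [map_mul, hφ, ← map_pow, coeff_map]

lemma ι_C (c : ℂ) : (PowerSeries.C (R := MvP)) (MvPolynomial.C c) = algebraMap ℂ R c := by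
  rw [PowerSeries.algebraMap_apply]
  rfl

lemma shiftNeg_C (c : ℂ) : shiftNeg (MvPolynomial.C c) = algebraMap ℂ R c := by
  rw [shiftNeg, MvPolynomial.eval₂Hom_C]
  exact ι_C c

/-- The series `-∑_{n≥1} (xⁿ/n) tⁿ` over `R`, where `x = X : R`. -/
def g0 : PowerSeries R := PowerSeries.mk fun n => if n = 0 then 0 else
  -(PowerSeries.C (R := MvP) (MvPolynomial.C ((n : ℂ)⁻¹)) * PowerSeries.X ^ n)

lemma constantCoeff_g0 : constantCoeff (R := R) g0 = 0 := by
  rw [← coeff_zero_eq_constantCoeff, g0, coeff_mk]; simp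

lemma map_shiftNeg_genQ :
    PowerSeries.map shiftNeg genQ = PowerSeries.map (PowerSeries.C (R := MvP)) genQ + g0 := by
  refine PowerSeries.ext fun n => ?_
  simp only [map_add, coeff_map, genQ, g0, coeff_mk]
  cases n with
  | zero => simp
  | succ n =>
    simp only [Nat.succ_ne_zero, if_false]
    rw [shiftNeg, MvPolynomial.eval₂Hom_X']
    ring

/-- geometric series `∑ xⁿ tⁿ`. -/
def geo : PowerSeries R := PowerSeries.mk fun n => (PowerSeries.X : R) ^ n

lemma geo_inv : geo * (1 - PowerSeries.C (R := R) (PowerSeries.X : R) * PowerSeries.X) = 1 := by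
  have key : geo * (1 - PowerSeries.C (R := R) (PowerSeries.X : R) * PowerSeries.X)
      = geo - (PowerSeries.C (R := R) (PowerSeries.X : R) * geo) * PowerSeries.X := by ring
  rw [key]
  refine PowerSeries.ext fun n => ?_
  rw [map_sub]
  cases n with
  | zero =>
    rw [coeff_zero_mul_X]
    simp [geo, coeff_mk]
  | succ n =>
    rw [coeff_succ_mul_X, coeff_C_mul, geo, coeff_mk, coeff_mk, coeff_one]
    simp [pow_succ, Nat.succ_ne_zero, mul_comm]

lemma deriv_g0 : d⁄dX R g0 = -(PowerSeries.C (R := R) (PowerSeries.X : R)) * geo := by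
  refine PowerSeries.ext fun n => ?_
  rw [coeff_derivative, g0, coeff_mk]
  simp only [Nat.succ_ne_zero, if_false]
  rw [neg_mul, neg_mul, map_neg, coeff_C_mul, geo, coeff_mk]
  apply neg_inj.mpr
  have hcast : PowerSeries.C (R := MvP) (MvPolynomial.C ((n : ℂ) + 1)) = ((n : R) + 1) := by
    simp
  have h2 : PowerSeries.C (R := MvP) (MvPolynomial.C (((n + 1 : ℕ) : ℂ))⁻¹) * PowerSeries.X ^ (n+1) *
      PowerSeries.C (R := MvP) (MvPolynomial.C ((n : ℂ) + 1)) =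
      PowerSeries.C (R := MvP) (MvPolynomial.C ((((n + 1 : ℕ) : ℂ))⁻¹ * ((n : ℂ) + 1))) *
        PowerSeries.X ^ (n+1) := by
    rw [map_mul, map_mul]; ring
  have h1 : (((n + 1 : ℕ) : ℂ))⁻¹ * ((n : ℂ) + 1) = 1 := by
    push_cast
    exact inv_mul_cancel₀ (Nat.cast_add_one_ne_zero n)
  rw [← hcast] at *
  rw [h2, h1, map_one, map_one, one_mul, pow_succ, mul_comm]

lemma E_g0 : E g0 = 1 - PowerSeries.C (R := R) (PowerSeries.X : R) * PowerSeries.X := by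
  apply ode_unique (a := d⁄dX R g0)
  · exact E_deriv constantCoeff_g0
  · rw [deriv_g0]
    have hd : d⁄dX R (1 - PowerSeries.C (R := R) (PowerSeries.X : R) * PowerSeries.X)
        = -(PowerSeries.C (R := R) (PowerSeries.X : R)) := by
      refine PowerSeries.ext fun n => ?_
      rw [coeff_derivative]
      cases n <;>
        simp [coeff_one, PowerSeries.coeff_C_mul, PowerSeries.coeff_X, PowerSeries.coeff_C]
    rw [hd]
    have : -(PowerSeries.C (R := R) (PowerSeries.X : R)) * geo *
        (1 - PowerSeries.C (R := R) (PowerSeries.X : R) * PowerSeries.X)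
        = -(PowerSeries.C (R := R) (PowerSeries.X : R)) *
          (geo * (1 - PowerSeries.C (R := R) (PowerSeries.X : R) * PowerSeries.X)) := by ring
    rw [this, geo_inv, mul_one]
  · rw [constantCoeff_E]
    simp

lemma constantCoeff_map_genQ (φ : MvP →+* A) :
    constantCoeff (R := A) (PowerSeries.map φ genQ) = 0 := by
  rw [← coeff_zero_eq_constantCoeff, coeff_map, genQ, coeff_mk]
  simp

lemma main_identity :
    PowerSeries.map shiftNeg (psExp genQ) =
      PowerSeries.map (PowerSeries.C (R := MvP)) (psExp genQ) *
        (1 - PowerSeries.C (R := R) (PowerSeries.X : R) * PowerSeries.X) := by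
  rw [map_psExp shiftNeg shiftNeg_C, map_psExp (PowerSeries.C (R := MvP)) ι_C,
    map_shiftNeg_genQ, E_add (constantCoeff_map_genQ _) constantCoeff_g0, E_g0]

lemma shiftNeg_hh_zero : shiftNeg (hh 0) = PowerSeries.C (R := MvP) (hh 0) := by
  have := congrArg (coeff (R := R) 0) main_identity
  rw [coeff_map, mul_sub, mul_one, map_sub] at this
  rw [hh, this, coeff_map]
  have : coeff (R := R) 0 (PowerSeries.map (PowerSeries.C (R := MvP)) (psExp genQ) *
      (PowerSeries.C (R := R) (PowerSeries.X : R) * PowerSeries.X)) = 0 := by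
    rw [show PowerSeries.map (PowerSeries.C (R := MvP)) (psExp genQ) *
        (PowerSeries.C (R := R) (PowerSeries.X : R) * PowerSeries.X) =
        (PowerSeries.C (R := R) (PowerSeries.X : R) * PowerSeries.map (PowerSeries.C (R := MvP)) (psExp genQ))
          * PowerSeries.X from by ring, coeff_zero_mul_X]
  rw [this, sub_zero]

lemma shiftNeg_hh_succ (n : ℕ) : shiftNeg (hh (n + 1)) =
    PowerSeries.C (R := MvP) (hh (n + 1)) - PowerSeries.X * PowerSeries.C (R := MvP) (hh n) := by
  have := congrArg (coeff (R := R) (n + 1)) main_identity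
  rw [coeff_map, mul_sub, mul_one, map_sub] at this
  rw [hh, this, coeff_map]
  congr 1
  rw [show PowerSeries.map (PowerSeries.C (R := MvP)) (psExp genQ) *
      (PowerSeries.C (R := R) (PowerSeries.X : R) * PowerSeries.X) =
      (PowerSeries.C (R := R) (PowerSeries.X : R) * PowerSeries.map (PowerSeries.C (R := MvP)) (psExp genQ))
        * PowerSeries.X from by ring, coeff_succ_mul_X, coeff_C_mul, coeff_map]
  rfl

lemma shiftNeg_hZ (k : ℤ) : shiftNeg (hZ k) =
    PowerSeries.C (R := MvP) (hZ k) - PowerSeries.X * PowerSeries.C (R := MvP) (hZ (k - 1)) := by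
  rcases lt_trichotomy k 0 with h | h | h
  · have h1 : k - 1 < 0 := by omega
    simp [hZ, h, h1, map_zero]
  · subst h
    have h1 : (0 : ℤ) - 1 < 0 := by norm_num
    simp only [hZ, h1, if_true, lt_irrefl, if_false, Int.toNat_zero]
    rw [shiftNeg_hh_zero]
    simp
  · obtain ⟨n, rfl⟩ : ∃ n : ℕ, k = (n : ℤ) + 1 := ⟨(k - 1).toNat, by omega⟩
    have h1 : ¬((n : ℤ) + 1 < 0) := by omega
    have h2 : ¬((n : ℤ) + 1 - 1 < 0) := by omega
    simp only [hZ, h1, h2, if_false]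
    have h3 : ((n : ℤ) + 1).toNat = n + 1 := by omega
    have h4 : ((n : ℤ) + 1 - 1).toNat = n := by omega
    rw [h3, h4, shiftNeg_hh_succ]

-- ### Matrix part

section MatrixPart

open Matrix

variable (l : List ℕ)

def lm : List ℤ := l.map (fun a => (a : ℤ))

/-- The statement's big matrix. -/
def auxM : Matrix (Fin (l.length + 1)) (Fin (l.length + 1)) MvP :=
  Matrix.of fun i j => hZ (((0 : ℤ) :: l.map (fun a => (a : ℤ))).getD (i : ℕ) 0
    - ((i : ℕ) : ℤ) + ((j : ℕ) : ℤ))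

def auxN : Matrix (Fin (l.length + 1)) (Fin (l.length + 1)) R :=
  Matrix.of fun i j => if (i : ℕ) = 0 then (PowerSeries.X : R) ^ (j : ℕ)
    else PowerSeries.C (R := MvP) (auxM l i j)

def auxU (n : ℕ) : Matrix (Fin n) (Fin n) R :=
  Matrix.of fun p q => if p = q then 1 else
    if (p : ℕ) + 1 = (q : ℕ) then -(PowerSeries.X : R) else 0

lemma det_auxU (n : ℕ) : (auxU n).det = 1 := by
  have h : (auxU n).BlockTriangular id := by
    intro p q hqp
    simp only [id] at hqp
    have h1 : p ≠ q := fun h => by subst h; exact lt_irrefl _ hqp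
    have h2 : (p : ℕ) + 1 ≠ (q : ℕ) := by omega
    simp [auxU, h1, h2]
  rw [Matrix.det_of_upperTriangular h]
  simp [auxU]

lemma sum_auxU_zero {n : ℕ} (f : Fin (n + 1) → R) :
    ∑ p, f p * auxU (n + 1) p 0 = f 0 := by
  have : ∀ p : Fin (n + 1), f p * auxU (n + 1) p 0 = if p = 0 then f p else 0 := by
    intro p
    have h2 : ¬((p : ℕ) + 1 = ((0 : Fin (n + 1)) : ℕ)) := by simp
    by_cases hp : p = 0 <;> simp [auxU, hp, h2]
  rw [Finset.sum_congr rfl fun p _ => this p, Finset.sum_ite_eq' Finset.univ 0 f]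
  simp

lemma sum_auxU_succ {n : ℕ} (f : Fin (n + 1) → R) (j : Fin n) :
    ∑ p, f p * auxU (n + 1) p j.succ = f j.succ + f j.castSucc * (-(PowerSeries.X : R)) := by
  have hne : j.succ ≠ j.castSucc := by
    intro h
    have := congrArg (fun x : Fin (n+1) => (x : ℕ)) h
    simp at this
  have key : ∀ p : Fin (n + 1), f p * auxU (n + 1) p j.succ =
      (if p = j.succ then f p else 0) + (if p = j.castSucc then f p * (-(PowerSeries.X : R)) else 0) := by
    intro p
    by_cases h1 : p = j.succ
    · subst h1
      simp [auxU, hne]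
    · by_cases h2 : p = j.castSucc
      · subst h2
        have hv : (j.castSucc : ℕ) + 1 = (j.succ : ℕ) := by simp
        simp [auxU, h1, hv]
      · have hv : ((p : ℕ) : ℕ) ≠ (j : ℕ) := by
          intro h
          apply h2
          apply Fin.ext
          simp [h]
        simp [auxU, h1, h2, hv]
  rw [Finset.sum_congr rfl fun p _ => key p, Finset.sum_add_distrib,
    Finset.sum_ite_eq' Finset.univ j.succ f,
    Finset.sum_ite_eq' Finset.univ j.castSucc (fun p => f p * (-(PowerSeries.X : R)))]
  simp


lemma det_auxN : (auxN l).det = ∑ k : Fin (l.length + 1),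
    PowerSeries.C (R := MvP) ((-1 : MvP) ^ (k : ℕ) *
      ((auxM l).submatrix Fin.succ k.succAbove).det) * (PowerSeries.X : R) ^ (k : ℕ) := by
  rw [Matrix.det_succ_row_zero]
  refine Finset.sum_congr rfl fun k _ => ?_
  have h0 : auxN l 0 k = (PowerSeries.X : R) ^ (k : ℕ) := by simp [auxN]
  have hsub : (auxN l).submatrix Fin.succ k.succAbove =
      (PowerSeries.C (R := MvP)).mapMatrix ((auxM l).submatrix Fin.succ k.succAbove) := by
    ext i j
    simp [auxN, Matrix.submatrix_apply, RingHom.mapMatrix_apply, Matrix.map_apply, Fin.val_succ]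
  rw [h0, hsub, ← RingHom.map_det, _root_.map_mul, map_pow, map_neg, _root_.map_one]
  ring

lemma NU_row0_zero : (auxN l * auxU (l.length + 1)) 0 0 = 1 := by
  rw [Matrix.mul_apply, sum_auxU_zero]
  simp [auxN]

lemma NU_row0_succ (j : Fin l.length) : (auxN l * auxU (l.length + 1)) 0 j.succ = 0 := by
  rw [Matrix.mul_apply, sum_auxU_succ]
  have h1 : auxN l 0 j.succ = (PowerSeries.X : R) ^ ((j : ℕ) + 1) := by simp [auxN]
  have h2 : auxN l 0 j.castSucc = (PowerSeries.X : R) ^ (j : ℕ) := by simp [auxN]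
  rw [h1, h2, pow_succ]
  ring

lemma NU_minor (i j : Fin l.length) : (auxN l * auxU (l.length + 1)) i.succ j.succ =
    shiftNeg (hZ ((l.map (fun a => (a : ℤ))).getD (i : ℕ) 0
      - ((i : ℕ) : ℤ) + ((j : ℕ) : ℤ))) := by
  rw [Matrix.mul_apply, sum_auxU_succ]
  have hi : ¬(((i.succ : Fin (l.length + 1)) : ℕ) = 0) := by simp
  have e1 : auxN l i.succ j.succ = PowerSeries.C (R := MvP)
      (hZ ((l.map (fun a => (a : ℤ))).getD (i : ℕ) 0 - ((i : ℕ) : ℤ) + ((j : ℕ) : ℤ))) := by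
    simp only [auxN, auxM, Matrix.of_apply, hi, if_false]
    congr 2
    simp only [Fin.val_succ, List.getD_cons_succ]
    push_cast
    ring
  have e2 : auxN l i.succ j.castSucc = PowerSeries.C (R := MvP)
      (hZ ((l.map (fun a => (a : ℤ))).getD (i : ℕ) 0 - ((i : ℕ) : ℤ) + ((j : ℕ) : ℤ) - 1)) := by
    simp only [auxN, auxM, Matrix.of_apply, hi, if_false]
    congr 2
    simp only [Fin.val_succ, Fin.coe_castSucc, List.getD_cons_succ]
    push_cast
    ring
  rw [e1, e2, shiftNeg_hZ]
  ring

lemma det_NU : (auxN l * auxU (l.length + 1)).det = shiftNeg (schur l) := by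
  rw [Matrix.det_succ_row_zero, Finset.sum_eq_single (0 : Fin (l.length + 1))]
  · rw [NU_row0_zero]
    have hsb : (0 : Fin (l.length + 1)).succAbove = Fin.succ := Fin.succAbove_zero
    rw [hsb]
    simp only [Fin.val_zero, pow_zero, one_mul, mul_one]
    -- now: det ((N*U).submatrix succ succ) = shiftNeg (schur l)
    rw [schur, detM, RingHom.map_det]
    have hlen : l.length = (l.map (fun a => (a : ℤ))).length := by
      induction l with
      | nil => rfl
      | cons a t ih => simpa using ih
    let e : Fin l.length ≃ Fin (l.map (fun a => (a : ℤ))).length := finCongr hlen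
    rw [← Matrix.det_submatrix_equiv_self e]
    congr 1
    ext i j : 1
    rw [Matrix.submatrix_apply, Matrix.submatrix_apply, NU_minor]
    simp only [RingHom.mapMatrix_apply, Matrix.map_apply, Matrix.of_apply]
    congr 2
    have hi : ((e i : Fin _) : ℕ) = (i : ℕ) := rfl
    have hj : ((e j : Fin _) : ℕ) = (j : ℕ) := rfl
    have hget : (l.map (fun a => (a : ℤ))).get (e i) =
        (l.map (fun a => (a : ℤ))).getD (i : ℕ) 0 := by
      rw [List.get_eq_getElem, List.getD_eq_getElem?_getD,
        List.getElem?_eq_getElem (by rw [← hlen]; exact i.isLt)]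
      rfl
    rw [hget, hi, hj]
  · intro k _ hk
    obtain ⟨j, rfl⟩ := Fin.eq_succ_of_ne_zero hk
    rw [NU_row0_succ]
    ring
  · intro h
    exact absurd (Finset.mem_univ _) h

end MatrixPart

end S2aux

/-- `s_λ(q-[z⁻¹]) = ∑_{k=0}^{ℓ} M^{[k]} z^{-k}` where `M^{[k]}` is the
`(1,k+1)`-th cofactor of the `(ℓ+1)×(ℓ+1)` matrix `(h_{k_i-i+j})` with rows `(0,λ₁,…,λ_ℓ)`. -/
theorem statement2 (l : List ℕ) (hl : IsPartition l) :
    shiftNeg (schur l) =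
      ∑ k : Fin (l.length + 1),
        PowerSeries.C (R := MvP) ((-1 : MvP) ^ (k : ℕ) *
          Matrix.det ((Matrix.of fun i j : Fin (l.length + 1) =>
              hZ (((0 : ℤ) :: l.map (fun a => (a : ℤ))).getD (i : ℕ) 0
                - ((i : ℕ) : ℤ) + ((j : ℕ) : ℤ))).submatrix Fin.succ k.succAbove)) *
          PowerSeries.X ^ (k : ℕ) := by
  rw [← S2aux.det_NU l, Matrix.det_mul, S2aux.det_auxU, mul_one, S2aux.det_auxN]
  rfl
end
end

section
/- For a hook partition $\lambda = (m|n)$ in Frobenius notation (i.e., $\lambda = (m+1, 1^n)$), the determinantal operator $T_0$ satisfies: $T_0(s_{(m|n)}) = -s_{(m-1|n+1)}$ if $m\ge 1$, and $T_0(s_{(0|n)}) = 0$. More generally, for $\lambda = (m_1,\dots,m_r|n_1,\dots,n_r)$ in Frobenius notation, $T_0(s_\lambda) = (-1)^r s_{(m_1-1,\dots,m_r-1|n_1+1,\dots,n_r+1)}$ if $m_r \ge 1$, and $T_0(s_\lambda)=0$ if $m_r = 0$. -/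
open PowerSeries

noncomputable section

/-- The partition with Frobenius coordinates `(m₁,…,m_r | n₁,…,n_r)`, as a list of parts. -/
def frobToList (r : ℕ) (m n : Fin r → ℕ) : List ℕ :=
  List.ofFn fun i : Fin (if h : 0 < r then n ⟨0, h⟩ + 1 else 0) =>
    if hi : (i : ℕ) < r then m ⟨(i : ℕ), hi⟩ + (i : ℕ) + 1
    else ((Finset.univ : Finset (Fin r)).filter fun j => (i : ℕ) + 1 ≤ n j + (j : ℕ) + 1).card

/-- The hook partition `(m | n) = (m+1, 1ⁿ)`. -/
def hook (m n : ℕ) : List ℕ := (m + 1) :: List.replicate n 1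

/-- The Frobenius rank (number of diagonal boxes) of a partition. -/
def frobR (l : List ℕ) : ℕ := ((Finset.range l.length).filter fun i => i + 1 ≤ l.getD i 0).card

/-- The Frobenius arm coordinate `m_i = λ_i - i` (0-based `i`). -/
def frobM (l : List ℕ) (i : ℕ) : ℕ := l.getD i 0 - (i + 1)

/-- The Frobenius leg coordinate `n_i = λ'_i - i` (0-based `i`). -/
def frobN (l : List ℕ) (i : ℕ) : ℕ :=
  ((Finset.range l.length).filter fun j => i + 1 ≤ l.getD j 0).card - (i + 1)

/-- The Plücker coordinate `π_λ = (-1)^{∑ n_i} det (A_{m_i, n_j})`. -/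
def piA (A : ℕ → ℕ → ℂ) (l : List ℕ) : ℂ :=
  (-1 : ℂ) ^ (∑ i ∈ Finset.range (frobR l), frobN l i) *
    Matrix.det (Matrix.of fun i j : Fin (frobR l) => A (frobM l i) (frobN l j))

lemma sa_chain {r : ℕ} (f : Fin r → ℕ) (hf : StrictAnti f) :
    ∀ (i t : ℕ) (h : i + t < r), f ⟨i + t, h⟩ + t ≤ f ⟨i, by omega⟩ := by
  intro i t
  induction t with
  | zero => intro h; simp
  | succ t ih =>
    intro h
    have h1 : i + t < r := by omega
    have h2 := hf (show (⟨i + t, h1⟩ : Fin r) < ⟨i + t + 1, by omega⟩ from by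
      simp [Fin.lt_def])
    have h3 := ih h1
    have : f ⟨i + (t + 1), h⟩ = f ⟨i + t + 1, by omega⟩ := rfl
    omega

lemma sa_le {r : ℕ} (f : Fin r → ℕ) (hf : StrictAnti f) (i j : Fin r) (hij : (i : ℕ) ≤ j) :
    f j + ((j : ℕ) - i) ≤ f i := by
  have h := sa_chain f hf i ((j : ℕ) - (i : ℕ)) (by omega)
  have hj : (⟨(i : ℕ) + ((j : ℕ) - (i : ℕ)), by omega⟩ : Fin r) = j := by
    ext; simp; omega
  rw [hj] at h
  have : f ⟨(i : ℕ), by omega⟩ = f i := by congr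
  omega

lemma frobToList_length {r : ℕ} (hr : 0 < r) (m n : Fin r → ℕ) :
    (frobToList r m n).length = n ⟨0, hr⟩ + 1 := by
  simp [frobToList, hr]

lemma frobToList_getElem {r : ℕ} (hr : 0 < r) (m n : Fin r → ℕ) (i : ℕ)
    (hi : i < (frobToList r m n).length) :
    (frobToList r m n)[i] =
      if h : i < r then m ⟨i, h⟩ + i + 1
      else ((Finset.univ : Finset (Fin r)).filter fun j => i + 1 ≤ n j + (j : ℕ) + 1).card := by
  simp [frobToList, List.getElem_ofFn]

lemma detM_eq_det {N : ℕ} (ks : List ℤ) (h : ks.length = N) :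
    detM ks = Matrix.det (Matrix.of fun i j : Fin N =>
      hZ (ks.getD (i : ℕ) 0 - ((i : ℕ) : ℤ) + ((j : ℕ) : ℤ))) := by
  rw [detM, ← Matrix.det_submatrix_equiv_self (finCongr h)]
  congr 1
  funext i j
  simp only [Matrix.submatrix_apply, Matrix.of_apply, finCongr_apply, Fin.coe_cast,
    List.get_eq_getElem]
  congr 2
  rw [List.getD_eq_getElem ks 0 (by exact i.isLt)]

lemma detM_perm {N : ℕ} (ks ks' : List ℤ) (h : ks.length = N) (h' : ks'.length = N)
    (σ : Equiv.Perm (Fin N))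
    (key : ∀ i : Fin N, ks'.getD (i : ℕ) 0 - ((i : ℕ) : ℤ) =
      ks.getD ((σ i : Fin N) : ℕ) 0 - (((σ i : Fin N) : ℕ) : ℤ)) :
    detM ks' = (Equiv.Perm.sign σ : ℤ) • detM ks := by
  rw [detM_eq_det ks h, detM_eq_det ks' h']
  have hmat : (Matrix.of fun i j : Fin N =>
      hZ (ks'.getD (i : ℕ) 0 - ((i : ℕ) : ℤ) + ((j : ℕ) : ℤ))) =
      (Matrix.of fun i j : Fin N =>
        hZ (ks.getD (i : ℕ) 0 - ((i : ℕ) : ℤ) + ((j : ℕ) : ℤ))).submatrix σ id := by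
    funext i j
    simp only [Matrix.submatrix_apply, Matrix.of_apply, id]
    congr 2
    have := key i
    omega
  rw [hmat, Matrix.det_permute]
  simp [Units.smul_def, zsmul_eq_mul]

lemma getD_map_nat (l : List ℕ) (i : ℕ) (h : i < l.length) :
    (List.map (fun a : ℕ => (a : ℤ)) l).getD i 0 = ((l.getD i 0 : ℕ) : ℤ) := by
  rw [List.getD_eq_getElem _ _ (by simpa using h), List.getD_eq_getElem _ _ h, List.getElem_map]

lemma frobToList_getD {r : ℕ} (hr : 0 < r) (m n : Fin r → ℕ) (i : ℕ)
    (hi : i < n ⟨0, hr⟩ + 1) :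
    (frobToList r m n).getD i 0 =
      if h : i < r then m ⟨i, h⟩ + i + 1
      else ((Finset.univ : Finset (Fin r)).filter fun j => i + 1 ≤ n j + (j : ℕ) + 1).card := by
  rw [List.getD_eq_getElem _ _ (by rw [frobToList_length hr]; omega)]
  rw [frobToList_getElem hr]

lemma coeM_eq (l : List ℕ) : (l.map (fun a => (a : ℤ))) = List.map (fun a : ℕ => (a : ℤ)) l := by
  induction l with
  | nil => rfl
  | cons a l ih =>
    simp only [List.map_cons]
    rw [← ih]
    rfl

lemma detM_main {r : ℕ} (hr : 0 < r) (m n : Fin r → ℕ)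
    (hm : StrictAnti m) (hn : StrictAnti n) (h1 : 1 ≤ m ⟨r - 1, by omega⟩) :
    detM ((0 : ℤ) :: List.map (fun a : ℕ => (a : ℤ)) (frobToList r m n)) =
      (-1 : MvP) ^ r * schur (frobToList r (fun i => m i - 1) (fun i => n i + 1)) := by
  have hmi : ∀ i : Fin r, 1 ≤ m i := by
    intro i
    have := sa_le m hm i ⟨r - 1, by omega⟩ (by simp; omega)
    omega
  have hni : ∀ j : Fin r, r ≤ n j + (j : ℕ) + 1 := by
    intro j
    have := sa_le n hn j ⟨r - 1, by omega⟩ (by simp; omega)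
    have hj := j.isLt
    simp at this
    omega
  have hn0 : ∀ j : Fin r, (n j : ℕ) + (j : ℕ) ≤ n ⟨0, hr⟩ := by
    intro j
    have := sa_le n hn ⟨0, hr⟩ j (by simp)
    simp at this
    omega
  set N := n ⟨0, hr⟩ + 2 with hN
  have hrN : r < N := by
    have := hni ⟨0, hr⟩
    have := hn0 ⟨0, hr⟩
    omega
  set L0 : List ℤ := (0 : ℤ) :: List.map (fun a : ℕ => (a : ℤ)) (frobToList r m n) with hL0
  set L1 : List ℤ := List.map (fun a : ℕ => (a : ℤ))
      (frobToList r (fun i => m i - 1) (fun i => n i + 1)) with hL1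
  have hlf : (frobToList r m n).length = n ⟨0, hr⟩ + 1 := frobToList_length hr m n
  have hlf' : (frobToList r (fun i => m i - 1) (fun i => n i + 1)).length = n ⟨0, hr⟩ + 2 :=
    frobToList_length hr _ _
  have hl0 : L0.length = N := by
    rw [hL0, List.length_cons, List.length_map, hlf] <;> omega
  have hl1 : L1.length = N := by
    rw [hL1, List.length_map, hlf'] <;> omega
  set σ : Equiv.Perm (Fin N) := Fin.cycleRange ⟨r, hrN⟩ with hσ
  have key : ∀ i : Fin N, L1.getD (i : ℕ) 0 - ((i : ℕ) : ℤ) =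
      L0.getD ((σ i : Fin N) : ℕ) 0 - (((σ i : Fin N) : ℕ) : ℤ) := by
    intro i
    have hiN := i.isLt
    rcases lt_trichotomy (i : ℕ) r with hlt | heq | hgt
    · -- σ i = i + 1
      have hσi : ((σ i : Fin N) : ℕ) = (i : ℕ) + 1 := by
        rw [hσ]
        exact Fin.coe_cycleRange_of_lt (Fin.lt_def.mpr hlt)
      rw [hσi, hL0, hL1, List.getD_cons_succ]
      rw [getD_map_nat _ _ (by rw [hlf']; omega), getD_map_nat _ _ (by rw [hlf]; omega)]
      rw [frobToList_getD hr m n _ (by omega), frobToList_getD hr _ _ _ (by omega)]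
      rw [dif_pos hlt, dif_pos hlt]
      have := hmi ⟨(i : ℕ), hlt⟩
      push_cast [Nat.cast_sub this]
      ring
    · -- σ i = 0
      have hσi : ((σ i : Fin N) : ℕ) = 0 := by
        rw [hσ]
        have hie : i = (⟨r, hrN⟩ : Fin N) := by ext; exact heq
        rw [hie, Fin.cycleRange_self]
        rfl
      rw [hσi, hL0, hL1, List.getD_cons_zero]
      rw [getD_map_nat _ _ (by rw [hlf']; omega)]
      rw [frobToList_getD hr _ _ _ (by omega)]
      rw [dif_neg (by omega), heq]
      rw [Finset.filter_true_of_mem (fun j _ => by have := hni j; omega)]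
      simp
    · -- σ i = i
      have hσi : ((σ i : Fin N) : ℕ) = (i : ℕ) := by
        rw [hσ, Fin.cycleRange_of_gt (Fin.lt_def.mpr hgt)]
      obtain ⟨k, hk⟩ : ∃ k, (i : ℕ) = k + 1 := ⟨(i : ℕ) - 1, by omega⟩
      rw [hσi, hL0, hL1, hk, List.getD_cons_succ]
      rw [getD_map_nat _ _ (by rw [hlf']; omega), getD_map_nat _ _ (by rw [hlf]; omega)]
      rw [frobToList_getD hr m n _ (by omega), frobToList_getD hr _ _ _ (by omega)]
      rw [dif_neg (by omega), dif_neg (by omega)]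
      have hcard : ((Finset.univ : Finset (Fin r)).filter
            fun j => k + 1 + 1 ≤ n j + 1 + (j : ℕ) + 1).card =
          ((Finset.univ : Finset (Fin r)).filter
            fun j => k + 1 ≤ n j + (j : ℕ) + 1).card := by
        congr 1
        apply Finset.filter_congr
        intro j _
        constructor <;> intro <;> omega
      rw [hcard]
  have hdet := detM_perm L0 L1 hl0 hl1 σ key
  have hsign : (Equiv.Perm.sign σ : ℤ) = (-1) ^ r := by
    rw [hσ, Fin.sign_cycleRange]
    push_cast
    rfl
  rw [hsign] at hdet
  rw [schur, coeM_eq, ← hL1, hdet]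
  rw [zsmul_eq_mul]
  push_cast
  rw [← mul_assoc, ← pow_add]
  rw [Even.neg_one_pow ⟨r, by ring⟩, one_mul]

lemma getD_cons_pos (a : ℤ) (l : List ℤ) (i : ℕ) (hi : 0 < i) :
    (a :: l).getD i 0 = l.getD (i - 1) 0 := by
  obtain ⟨k, rfl⟩ : ∃ k, i = k + 1 := ⟨i - 1, by omega⟩
  simp [List.getD_cons_succ]

lemma detM_zero {r : ℕ} (hr : 0 < r) (m n : Fin r → ℕ)
    (hn : StrictAnti n) (h0 : m ⟨r - 1, by omega⟩ = 0) :
    detM ((0 : ℤ) :: List.map (fun a : ℕ => (a : ℤ)) (frobToList r m n)) = 0 := by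
  have hn0 : r - 1 ≤ n ⟨0, hr⟩ := by
    have := sa_le n hn ⟨0, hr⟩ ⟨r - 1, by omega⟩ (by simp)
    simp at this
    omega
  set N := n ⟨0, hr⟩ + 2 with hN
  have hrN : r < N := by omega
  have hlf : (frobToList r m n).length = n ⟨0, hr⟩ + 1 := frobToList_length hr m n
  have hl0 : ((0 : ℤ) :: List.map (fun a : ℕ => (a : ℤ)) (frobToList r m n)).length = N := by
    rw [List.length_cons, List.length_map, hlf] <;> omega
  rw [detM_eq_det _ hl0]
  apply Matrix.det_zero_of_row_eq (i := (⟨0, by omega⟩ : Fin N)) (j := ⟨r, hrN⟩)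
    (by simp [Fin.ext_iff]; omega)
  funext j
  simp only [Matrix.of_apply]
  have hgd : ((0 : ℤ) :: List.map (fun a : ℕ => (a : ℤ)) (frobToList r m n)).getD r 0 = (r : ℤ) := by
    rw [getD_cons_pos _ _ _ hr]
    rw [getD_map_nat _ _ (by rw [hlf]; omega)]
    rw [frobToList_getD hr m n _ (by omega)]
    rw [dif_pos (show r - 1 < r by omega)]
    have h0' : m ⟨r - 1, show r - 1 < r by omega⟩ = 0 := h0
    rw [h0']
    push_cast
    omega
  have h00 : ((0 : ℤ) :: List.map (fun a : ℕ => (a : ℤ)) (frobToList r m n)).getD 0 0 = 0 := by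
    rw [List.getD_cons_zero]
  simp only [Fin.val_mk, h00, hgd]
  congr 1
  push_cast
  ring

lemma fin1_strictAnti (f : Fin 1 → ℕ) : StrictAnti f := by
  intro a b h
  rw [Subsingleton.elim a b] at h
  exact absurd h (lt_irrefl _)

lemma frobToList_one (f g : Fin 1 → ℕ) : frobToList 1 f g = hook (f 0) (g 0) := by
  have h01 : (⟨0, by norm_num⟩ : Fin 1) = 0 := rfl
  apply List.ext_getElem
  · rw [frobToList_length (by norm_num), h01]
    simp [hook]
  · intro i h1 h2
    rw [frobToList_getElem (by norm_num)]
    have hlen : i < g 0 + 1 := by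
      rw [frobToList_length (by norm_num), h01] at h1
      exact h1
    rcases i with _ | k
    · rw [dif_pos (by norm_num)]
      simp [hook, h01]
    · rw [dif_neg (by omega)]
      rw [Finset.filter_true_of_mem (fun j _ => by
        rw [Subsingleton.elim j 0]
        simp
        omega)]
      simp [hook]

/-- `T₀(s_{(m|n)}) = -s_{(m-1|n+1)}` for `m ≥ 1` and `T₀(s_{(0|n)}) = 0`; more
generally `T₀(s_{(m₁,…,m_r|n₁,…,n_r)}) = (-1)^r s_{(m₁-1,…,m_r-1|n₁+1,…,n_r+1)}` if `m_r ≥ 1`,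
and `0` if `m_r = 0`.  Here `T₀(s_λ) = det M_{0,λ₁,…,λ_ℓ}`. -/
theorem statement4 (r : ℕ) (hr : 1 ≤ r) (m n : Fin r → ℕ)
    (hm : StrictAnti m) (hn : StrictAnti n) :
    (∀ m' n' : ℕ, 1 ≤ m' →
      detM ((0 : ℤ) :: (hook m' n').map (fun a => (a : ℤ))) =
        -schur (hook (m' - 1) (n' + 1))) ∧
    (∀ n' : ℕ, detM ((0 : ℤ) :: (hook 0 n').map (fun a => (a : ℤ))) = 0) ∧
    (1 ≤ m ⟨r - 1, by omega⟩ →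
      detM ((0 : ℤ) :: (frobToList r m n).map (fun a => (a : ℤ))) =
        (-1 : MvP) ^ r * schur (frobToList r (fun i => m i - 1) (fun i => n i + 1))) ∧
    (m ⟨r - 1, by omega⟩ = 0 →
      detM ((0 : ℤ) :: (frobToList r m n).map (fun a => (a : ℤ))) = 0) := by
  refine ⟨?_, ?_, ?_, ?_⟩
  · intro m' n' hm'
    have h1 : hook m' n' = frobToList 1 ![m'] ![n'] := by rw [frobToList_one]; simp
    rw [coeM_eq, h1]
    rw [detM_main (by norm_num) ![m'] ![n'] (fin1_strictAnti _) (fin1_strictAnti _)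
      (by simpa using hm')]
    rw [frobToList_one]
    simp
  · intro n'
    have h1 : hook 0 n' = frobToList 1 ![0] ![n'] := by rw [frobToList_one]; simp
    rw [coeM_eq, h1]
    exact detM_zero (by norm_num) ![0] ![n'] (fin1_strictAnti _) (by simp)
  · intro h1
    rw [coeM_eq]
    exact detM_main hr m n hm hn h1
  · intro h0
    rw [coeM_eq]
    exact detM_zero hr m n hn h0
end
end

section
/- Define $g_0^{\Theta(C)} = 1$ and $g_n^{\Theta(C)} = (n-1)! \sum_{k=1}^n \frac{1}{k!(k-1)!} \prod_{i=1}^k \left(C + \frac{i(i-1)}{2}\right)$ for $n \ge 1$, and define $\theta_n := \frac{(-1)^n}{n!}\prod_{i=0}^{n-1}\left(C + \frac{i(i+1)}{2}\right)$ for $n\ge 0$. Then the formal series $g(z) = \sum_{n\ge 0} g_n^{\Theta(C)} z^{-n}$ is the unique solution in $1 + z^{-1}\mathbb{C}[[z^{-1}]]$ of the ODE $g'(z) + g(z) = \theta(-z)$, where $\theta(z) = \sum_{n\ge 0} \theta_n z^{-n}$ and $g'(z) = \sum_{n\ge 1} (-n) g_n^{\Theta(C)} z^{-n-1}$. -/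
noncomputable section

/-- The coefficients `g_n^{Θ(C)}`. -/
def gTheta (C : ℂ) (n : ℕ) : ℂ :=
  if n = 0 then 1 else ((n - 1).factorial : ℂ) *
    ∑ k ∈ Finset.Icc 1 n, ((k.factorial : ℂ) * ((k - 1).factorial : ℂ))⁻¹ *
      ∏ i ∈ Finset.Icc 1 k, (C + (i : ℂ) * ((i : ℂ) - 1) / 2)

/-- The coefficients `θ_n = (-1)^n/n! ∏_{i=0}^{n-1} (C + i(i+1)/2)`. -/
def thetaSeq (C : ℂ) (n : ℕ) : ℂ :=
  ((-1 : ℂ) ^ n / (n.factorial : ℂ)) * ∏ i ∈ Finset.range n, (C + (i : ℂ) * ((i : ℂ) + 1) / 2)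

/-- The number `a_m`. -/
def aM (m : ℕ) : ℂ :=
  ∑ k ∈ Finset.Icc 1 m, ((k.factorial : ℂ) * ((k - 1).factorial : ℂ))⁻¹ *
    ∏ i ∈ Finset.Icc 1 k, (-((m : ℂ) * ((m : ℂ) + 1) / 2) + (i : ℂ) * ((i : ℂ) - 1) / 2)

/-- Derivative with respect to `z` of a series in `z⁻¹` (the variable `PowerSeries.X` is
`z⁻¹`): `d/dz (z^{-j}) = -j z^{-j-1}`. -/
def DzFull (f : PowerSeries ℂ) : PowerSeries ℂ :=
  PowerSeries.mk fun n => if n = 0 then 0 else -(((n : ℕ) : ℂ) - 1) * PowerSeries.coeff (n - 1) f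

lemma prodEq (C : ℂ) (k : ℕ) :
    ∏ i ∈ Finset.Icc 1 k, (C + (i : ℂ) * ((i : ℂ) - 1) / 2) =
    ∏ i ∈ Finset.range k, (C + (i : ℂ) * ((i : ℂ) + 1) / 2) := by
  induction k with
  | zero => simp
  | succ k ih =>
    rw [Finset.prod_Icc_succ_top (by omega), ih, Finset.prod_range_succ]
    push_cast
    ring

lemma gTheta_rec (C : ℂ) (n : ℕ) (hn : 1 ≤ n) :
    gTheta C n = ((n : ℂ) - 1) * gTheta C (n - 1) +
      ((n.factorial : ℂ))⁻¹ * ∏ i ∈ Finset.range n, (C + (i : ℂ) * ((i : ℂ) + 1) / 2) := by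
  match n, hn with
  | 1, _ => simp [gTheta]
  | (m+2), _ =>
    have hsplit := Finset.sum_Icc_succ_top (a := 1) (b := m+1)
      (f := fun k => ((k.factorial : ℂ) * ((k - 1).factorial : ℂ))⁻¹ *
        ∏ i ∈ Finset.Icc 1 k, (C + (i : ℂ) * ((i : ℂ) - 1) / 2)) (by omega)
    simp only [gTheta, Nat.add_sub_cancel, if_neg (by omega : ¬ m+2 = 0),
      if_neg (by omega : ¬ m+1 = 0)]
    rw [show m + 2 - 1 = m + 1 from rfl, show m + 1 - 1 = m from rfl, hsplit]
    rw [show m + 1 + 1 = m + 2 from rfl, show m + 2 - 1 = m + 1 from rfl, prodEq]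
    have h1 : ((m+1).factorial : ℂ) ≠ 0 := Nat.cast_ne_zero.2 (Nat.factorial_ne_zero _)
    have h2 : ((m+2).factorial : ℂ) ≠ 0 := Nat.cast_ne_zero.2 (Nat.factorial_ne_zero _)
    have hf1 : ((m+1).factorial : ℂ) = ((m:ℂ)+1) * (m.factorial : ℂ) := by
      rw [Nat.factorial_succ]; push_cast; ring
    have key : ((m+1).factorial : ℂ) * (((m+2).factorial : ℂ) * ((m+1).factorial : ℂ))⁻¹
        = ((m+2).factorial : ℂ)⁻¹ := by
      field_simp
    push_cast
    linear_combination (∑ k ∈ Finset.Icc 1 (m+1), ((k.factorial : ℂ) * ((k - 1).factorial : ℂ))⁻¹ *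
      ∏ i ∈ Finset.Icc 1 k, (C + (i : ℂ) * ((i : ℂ) - 1) / 2)) * hf1 +
      (∏ i ∈ Finset.range (m+2), (C + (i : ℂ) * ((i : ℂ) + 1) / 2)) * key

lemma rhsEq (C : ℂ) (n : ℕ) :
    (-1 : ℂ) ^ n * thetaSeq C n =
      ((n.factorial : ℂ))⁻¹ * ∏ i ∈ Finset.range n, (C + (i : ℂ) * ((i : ℂ) + 1) / 2) := by
  have h : ((-1 : ℂ) ^ n) * ((-1 : ℂ) ^ n) = 1 := by
    rw [← mul_pow]; norm_num
  unfold thetaSeq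
  linear_combination (((n.factorial : ℂ))⁻¹ * ∏ i ∈ Finset.range n,
    (C + (i : ℂ) * ((i : ℂ) + 1) / 2)) * h

/-- `g(z) = ∑ g_n^{Θ(C)} z^{-n}` is the unique solution in `1 + z⁻¹ℂ[[z⁻¹]]` of
`g'(z) + g(z) = θ(-z)`, where `θ(-z) = ∑ (-1)ⁿ θ_n z^{-n}`. -/
theorem statement9 (C : ℂ) :
    (DzFull (PowerSeries.mk (gTheta C)) + PowerSeries.mk (gTheta C) =
      PowerSeries.mk fun n => (-1 : ℂ) ^ n * thetaSeq C n) ∧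
    (∀ G : PowerSeries ℂ, PowerSeries.constantCoeff G = 1 →
      DzFull G + G = (PowerSeries.mk fun n => (-1 : ℂ) ^ n * thetaSeq C n) →
      G = PowerSeries.mk (gTheta C)) := by
  constructor
  · ext n
    rw [map_add]
    simp only [DzFull, PowerSeries.coeff_mk, rhsEq]
    cases n with
    | zero => simp [gTheta, thetaSeq]
    | succ m =>
      rw [if_neg (by omega), gTheta_rec C (m+1) (by omega)]
      simp only [Nat.add_sub_cancel]
      push_cast
      ring
  · intro G h0 heq
    ext n
    rw [PowerSeries.coeff_mk]
    induction n with
    | zero =>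
      simpa [gTheta, ← PowerSeries.coeff_zero_eq_constantCoeff] using h0
    | succ m ih =>
      have := congrArg (PowerSeries.coeff (m+1)) heq
      rw [map_add, PowerSeries.coeff_mk, rhsEq] at this
      simp only [DzFull, PowerSeries.coeff_mk, if_neg (by omega : ¬ m+1 = 0),
        Nat.add_sub_cancel] at this
      rw [gTheta_rec C (m+1) (by omega)]
      simp only [Nat.add_sub_cancel]
      rw [← ih]
      linear_combination this
end
end
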